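/- arXiv:1407.5943 — 3 statements merged into one kernel-verified Lean document; each statement's English description precedes it below -/
import Mathlib

section
/- Let N ≥ 4 be an integer, Δθ = 2π/N, and let indices i be taken modulo N. Let g_i > 0 be constants and let L : I → (ZMod N → ℝ) be differentiable on an interval I with L_i(t) > 0 for all i and t. Define ω_i(t) = 2·tan(Δθ/2)·g_i / L_i(t), and suppose L̇_i = 2·cot(Δθ)·ω_i - csc(Δθ)·(ω_{i+1} + ω_{i-1}). Then the total length satisfies d/dt ∑_{i=0}^{N-1} L_i(t) = - ∑_{i=0}^{N-1} 4·g_i·(cot Δθ - csc Δθ)² / L_i(t); in particular the total length of the polygon is strictly decreasing. -/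
/-!
Summing the evolution law over all sides, the two neighbour terms `ω_{i±1}` become copies of
`∑ ω_i` after a cyclic shift, so `d/dt ∑ L_i = 2 (cot Δθ - csc Δθ) ∑ ω_i`. Since
`cot Δθ - csc Δθ = -tan (Δθ/2)` and `ω_i = 2 tan (Δθ/2) g_i / L_i`, this is
`-∑ 4 g_i (cot Δθ - csc Δθ)² / L_i`, which is negative because `0 < Δθ < π` for `N ≥ 3`.
-/

open Real Finset

lemma Real.cot_sub_csc_eq_neg_tan_half {x : ℝ} (hx : sin x ≠ 0) :
    cos x / sin x - 1 / sin x = -tan (x / 2) := by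
  have hsin : sin x = 2 * sin (x / 2) * cos (x / 2) := by rw [← sin_two_mul]; ring_nf
  have hcos : cos x = cos (x / 2) ^ 2 - sin (x / 2) ^ 2 := by rw [← cos_two_mul']; ring_nf
  have hs : sin (x / 2) ≠ 0 := fun h => hx (by rw [hsin, h]; ring)
  have hc : cos (x / 2) ≠ 0 := fun h => hx (by rw [hsin, h]; ring)
  rw [tan_eq_sin_div_cos, hsin, hcos]
  field_simp
  linear_combination sin_sq_add_cos_sq (x / 2)

lemma Fintype.sum_mul_sub_mul_neighbors {G R : Type*} [AddGroup G] [Fintype G] [CommRing R]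
    (a b : R) (d : G) (ω : G → R) :
    ∑ i, (a * ω i - b * (ω (i + d) + ω (i - d))) = (a - 2 * b) * ∑ i, ω i := by
  have hadd : ∑ i, ω (i + d) = ∑ i, ω i := Equiv.sum_comp (Equiv.addRight d) ω
  have hsub : ∑ i, ω (i - d) = ∑ i, ω i := Equiv.sum_comp (Equiv.subRight d) ω
  rw [sum_sub_distrib, ← mul_sum, ← mul_sum, sum_add_distrib, hadd, hsub]
  ring

lemma two_pi_div_mem_Ioo {N : ℕ} (hN : 3 ≤ N) : 2 * π / N ∈ Set.Ioo 0 π := by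
  have hN' : (3 : ℝ) ≤ N := by exact_mod_cast hN
  refine ⟨by positivity, ?_⟩
  rw [div_lt_iff₀ (by linarith)]
  nlinarith [pi_pos]

lemma strictAntiOn_of_hasDerivAt_neg {I : Set ℝ} (hI : Convex ℝ I) {f f' : ℝ → ℝ}
    (hf : ∀ t ∈ I, HasDerivAt f (f' t) t) (hf' : ∀ t ∈ I, f' t < 0) : StrictAntiOn f I :=
  strictAntiOn_of_hasDerivWithinAt_neg hI (fun t ht => (hf t ht).continuousAt.continuousWithinAt)
    (fun t ht => (hf t (interior_subset ht)).hasDerivWithinAt)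
    (fun t ht => hf' t (interior_subset ht))

lemma sum_crystalline_velocity {N : ℕ} [NeZero N] {θ : ℝ} (hθ : sin θ ≠ 0)
    (g L L' ω : ZMod N → ℝ) (hL : ∀ i, L i ≠ 0)
    (hω : ∀ i, ω i = 2 * tan (θ / 2) * g i / L i)
    (hL' : ∀ i, L' i = 2 * (cos θ / sin θ) * ω i - (1 / sin θ) * (ω (i + 1) + ω (i - 1))) :
    ∑ i, L' i = -∑ i, 4 * g i * (cos θ / sin θ - 1 / sin θ) ^ 2 / L i := by
  have hcoef : 2 * (cos θ / sin θ) - 2 * (1 / sin θ) = -2 * tan (θ / 2) := by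
    rw [← mul_sub, cot_sub_csc_eq_neg_tan_half hθ]; ring
  rw [Fintype.sum_congr _ _ hL', Fintype.sum_mul_sub_mul_neighbors, hcoef,
    cot_sub_csc_eq_neg_tan_half hθ, mul_sum, ← sum_neg_distrib]
  refine sum_congr rfl fun i _ => ?_
  rw [hω]
  field_simp [hL i]
  ring

/-- The total length of the crystalline polygon satisfies
`d/dt ∑ᵢ Lᵢ = - ∑ᵢ 4 gᵢ (cot Δθ - csc Δθ)² / Lᵢ`; in particular it is
strictly decreasing. -/
theorem stmt4 (N : ℕ) [NeZero N] (hN : 4 ≤ N) (Δθ : ℝ) (hΔθ : Δθ = 2 * π / N)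
    (g : ZMod N → ℝ) (hg : ∀ i, 0 < g i)
    (I : Set ℝ) (hI : Convex ℝ I)
    (L L' : ℝ → ZMod N → ℝ) (ω : ℝ → ZMod N → ℝ)
    (hω : ∀ t i, ω t i = 2 * Real.tan (Δθ / 2) * g i / L t i)
    (hLpos : ∀ t ∈ I, ∀ i, 0 < L t i)
    (hL : ∀ t ∈ I, ∀ i, HasDerivAt (fun s => L s i) (L' t i) t)
    (hL' : ∀ t ∈ I, ∀ i, L' t i =
      2 * (Real.cos Δθ / Real.sin Δθ) * ω t i
        - (1 / Real.sin Δθ) * (ω t (i + 1) + ω t (i - 1))) :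
    (∀ t ∈ I, HasDerivAt (fun s => ∑ i : ZMod N, L s i)
      (- ∑ i : ZMod N,
        4 * g i * (Real.cos Δθ / Real.sin Δθ - 1 / Real.sin Δθ) ^ 2 / L t i) t) ∧
    StrictAntiOn (fun t => ∑ i : ZMod N, L t i) I := by
  obtain ⟨hΔ₀, hΔπ⟩ : Δθ ∈ Set.Ioo 0 π := by rw [hΔθ]; exact two_pi_div_mem_Ioo (by omega)
  have hsin : sin Δθ ≠ 0 := (sin_pos_of_pos_of_lt_pi hΔ₀ hΔπ).ne'
  have hc : cos Δθ / sin Δθ - 1 / sin Δθ ≠ 0 := by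
    rw [cot_sub_csc_eq_neg_tan_half hsin, neg_ne_zero]
    exact (tan_pos_of_pos_of_lt_pi_div_two (by linarith) (by linarith)).ne'
  have hderiv : ∀ t ∈ I, HasDerivAt (fun s => ∑ i : ZMod N, L s i)
      (-∑ i, 4 * g i * (cos Δθ / sin Δθ - 1 / sin Δθ) ^ 2 / L t i) t := fun t ht => by
    rw [← sum_crystalline_velocity hsin g (L t) (L' t) (ω t) (fun i => (hLpos t ht i).ne')
      (hω t) (hL' t ht)]
    exact HasDerivAt.fun_sum fun i _ => hL t ht i
  refine ⟨hderiv, strictAntiOn_of_hasDerivAt_neg hI hderiv fun t ht =>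
    neg_neg_of_pos (sum_pos (fun i _ => ?_) univ_nonempty)⟩
  have := hLpos t ht i
  have := hg i
  positivity
end

section
/- Let N ≥ 4 be an integer, Δθ = 2π/N, and let indices i be taken modulo N. Fix T̃ > 0 and constants M ≥ 1, H > 0, C_h ≥ 0. Let h : ℝ → ℝ satisfy 0 < h(θ) ≤ H for all θ. Let W : ℝ × [0,T̃] → ℝ be such that θ ↦ W(θ,t) is 2π-periodic and four times differentiable with |∂_θ^j W(θ,t)| ≤ M for j = 0,1,2,3,4 and all (θ,t), W is differentiable in t, and W satisfies W_t(θ,t) = h(θ)·(W(θ,t)²·W_θθ(θ,t) + W(θ,t)³). Let h_i be constants with 0 < h_i ≤ H and |h_i - h(iΔθ)| ≤ C_h·(Δθ)², and let ω : [0,T̃] → (ZMod N → ℝ) be differentiable with |ω_i(t)| ≤ M, satisfying ω̇_i = h_i·[ω_i²·(ω_{i+1} - 2ω_i + ω_{i-1})/(2·(1 - cos Δθ)) + ω_i³]. Then there exist constants b ≥ 0 and C ≥ 0, depending only on M, H, and C_h (and not on N, W, ω, or t), such that for all t ∈ [0,T̃]: max_{0 ≤ i ≤ N-1} |W(iΔθ,t)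 - ω_i(t)| ≤ (max_{0 ≤ i ≤ N-1} |W(iΔθ,0) - ω_i(0)|)·e^{b·t} + C·(Δθ)²·t·e^{b·t}. -/
open Real Set Filter Topology Finset

/-!
Write `eᵢ(t) = W(iΔθ, t) - ωᵢ(t)` and `E(t) = maxᵢ |eᵢ(t)|`, and let `i` be an index with
`σ eᵢ(t) = E(t)`, `σ = ±1`. Since the neighbouring errors satisfy `σ eᵢ₊₁, σ eᵢ₋₁ ≤ E`, the
crystalline Laplacian of `ω` at `i` lies (after multiplication by `σ`) above the second difference
quotient `(W(θ + Δθ) - 2 W(θ) + W(θ - Δθ)) / (2 (1 - cos Δθ))` of `W`, and it enters the speed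
`hᵢ (ωᵢ² L + ωᵢ³)` with the nonnegative coefficient `hᵢ ωᵢ²`. By Taylor's theorem and
`2 (1 - cos Δθ) = Δθ² + O(Δθ⁴)` that quotient is `W_θθ + O(Δθ²)`, so `σ ėᵢ ≤ b E + C Δθ²`.
Thus the right Dini derivative of `E` is at most `b E + C Δθ²`, and Grönwall's inequality
concludes.
-/

lemma sq_sub_pow_four_div_le_two_mul_one_sub_cos (x : ℝ) :
    x ^ 2 - x ^ 4 / 12 ≤ 2 * (1 - cos x) := by
  wlog hx : 0 ≤ x generalizing x
  · have := this (-x) (by linarith)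
    rwa [cos_neg, neg_sq, Even.neg_pow (by decide)] at this
  rcases le_or_gt (x ^ 2) 12 with hx12 | hx12
  · have hsin : x / 2 - (x / 2) ^ 3 / 6 ≤ sin (x / 2) := sin_ge_sub_cube (by positivity)
    have hsq : (x / 2 - (x / 2) ^ 3 / 6) ^ 2 ≤ sin (x / 2) ^ 2 :=
      pow_le_pow_left₀ (by nlinarith) hsin 2
    rw [sin_sq_eq_half_sub, show 2 * (x / 2) = x by ring] at hsq
    nlinarith [sq_nonneg (x ^ 3)]
  · nlinarith [cos_le_one x]

lemma abs_sub_taylor_three_le {V : ℝ → ℝ} {M : ℝ} (hV : ContDiff ℝ 4 V)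
    (h4 : ∀ θ, |iteratedDeriv 4 V θ| ≤ M) (θ s : ℝ) :
    |V (θ + s) - (V θ + s * deriv V θ + s ^ 2 / 2 * iteratedDeriv 2 V θ
      + s ^ 3 / 6 * iteratedDeriv 3 V θ)| ≤ M * s ^ 4 / 24 := by
  rcases eq_or_ne s 0 with rfl | hs
  · simp
  have hθs : θ ≠ θ + s := by simpa using hs
  obtain ⟨x', -, hx'⟩ := taylor_mean_remainder_lagrange_iteratedDeriv (n := 3) hθs hV.contDiffOn
  have hwithin : ∀ k ≤ 3, iteratedDerivWithin k V (uIcc θ (θ + s)) θ = iteratedDeriv k V θ :=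
    fun k hk => iteratedDerivWithin_eq_iteratedDeriv (uniqueDiffOn_uIcc hθs)
      (hV.contDiffAt.of_le (by exact_mod_cast (show k ≤ 4 by omega))) left_mem_uIcc
  simp only [taylor_within_apply, sum_range_succ, sum_range_zero, hwithin _ (by norm_num : 0 ≤ 3),
    hwithin 1 (by norm_num), hwithin 2 (by norm_num), hwithin 3 (by norm_num), smul_eq_mul,
    add_sub_cancel_left] at hx'
  norm_num [Nat.factorial] at hx'
  rw [show s ^ 2 / 2 = 1 / 2 * s ^ 2 by ring, show s ^ 3 / 6 = 1 / 6 * s ^ 3 by ring, hx',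
    abs_div, abs_mul, abs_of_nonneg (by positivity : (0 : ℝ) ≤ s ^ 4),
    abs_of_pos (by norm_num : (0 : ℝ) < 24)]
  gcongr
  exact h4 x'

lemma abs_add_sub_two_mul_sub_sq_mul_iteratedDeriv_two_le {V : ℝ → ℝ} {M : ℝ}
    (hV : ContDiff ℝ 4 V) (h4 : ∀ θ, |iteratedDeriv 4 V θ| ≤ M) (θ s : ℝ) :
    |V (θ + s) + V (θ - s) - 2 * V θ - s ^ 2 * iteratedDeriv 2 V θ| ≤ M * s ^ 4 / 12 := by
  have hplus := abs_sub_taylor_three_le hV h4 θ s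
  have hminus := abs_sub_taylor_three_le hV h4 θ (-s)
  calc |V (θ + s) + V (θ - s) - 2 * V θ - s ^ 2 * iteratedDeriv 2 V θ|
      = |(V (θ + s) - (V θ + s * deriv V θ + s ^ 2 / 2 * iteratedDeriv 2 V θ
          + s ^ 3 / 6 * iteratedDeriv 3 V θ)) + (V (θ + -s) - (V θ + -s * deriv V θ
          + (-s) ^ 2 / 2 * iteratedDeriv 2 V θ + (-s) ^ 3 / 6 * iteratedDeriv 3 V θ))| := by
        ring_nf
    _ ≤ M * s ^ 4 / 24 + M * (-s) ^ 4 / 24 := (abs_add_le _ _).trans (add_le_add hplus hminus)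
    _ = M * s ^ 4 / 12 := by ring

lemma abs_iteratedDeriv_two_sub_centralDiff_div_le {V : ℝ → ℝ} {M Δ : ℝ} (hV : ContDiff ℝ 4 V)
    (h2 : ∀ θ, |iteratedDeriv 2 V θ| ≤ M) (h4 : ∀ θ, |iteratedDeriv 4 V θ| ≤ M)
    (hΔ : 0 < Δ) (hΔ2 : Δ ≤ 2) (θ : ℝ) :
    |iteratedDeriv 2 V θ - (V (θ + Δ) - 2 * V θ + V (θ - Δ)) / (2 * (1 - cos Δ))|
      ≤ M * Δ ^ 2 / 4 := by
  set c := 2 * (1 - cos Δ)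
  set κ := iteratedDeriv 2 V θ
  set S := V (θ + Δ) - 2 * V θ + V (θ - Δ)
  have hc_le : c ≤ Δ ^ 2 := by linarith [one_sub_sq_div_two_le_cos (x := Δ)]
  have hc_ge : Δ ^ 2 - Δ ^ 4 / 12 ≤ c := sq_sub_pow_four_div_le_two_mul_one_sub_cos Δ
  have hΔ4 : Δ ^ 4 ≤ 4 * Δ ^ 2 := by
    rw [show Δ ^ 4 = Δ ^ 2 * Δ ^ 2 by ring, mul_comm 4]
    exact mul_le_mul_of_nonneg_left (by nlinarith) (sq_nonneg Δ)
  have hc : 2 * Δ ^ 2 / 3 ≤ c := by linarith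
  have hcpos : 0 < c := by nlinarith
  have hS : |S - Δ ^ 2 * κ| ≤ M * Δ ^ 4 / 12 := by
    simpa [S, κ, add_sub_right_comm] using
      abs_add_sub_two_mul_sub_sq_mul_iteratedDeriv_two_le hV h4 θ Δ
  have hcκ : |(Δ ^ 2 - c) * κ| ≤ Δ ^ 4 / 12 * M := by
    rw [abs_mul]
    exact mul_le_mul (abs_le.2 ⟨by linarith, by linarith⟩) (h2 θ) (abs_nonneg _) (by positivity)
  have hSc : |S - c * κ| ≤ M * Δ ^ 4 / 6 := by
    calc |S - c * κ| = |(S - Δ ^ 2 * κ) + (Δ ^ 2 - c) * κ| := by ring_nf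
      _ ≤ M * Δ ^ 4 / 12 + Δ ^ 4 / 12 * M := (abs_add_le _ _).trans (add_le_add hS hcκ)
      _ = M * Δ ^ 4 / 6 := by ring
  have hM : 0 ≤ M := (abs_nonneg _).trans (h2 θ)
  rw [show κ - S / c = -((S - c * κ) / c) by field_simp; ring, abs_neg, abs_div,
    abs_of_pos hcpos, div_le_iff₀ hcpos]
  nlinarith [mul_le_mul_of_nonneg_left hc (by positivity : 0 ≤ M * Δ ^ 2 / 4)]

lemma Function.Periodic.map_intCast_val_mul {α : Type*} {f : ℝ → α} {N : ℕ} [NeZero N] {Δ : ℝ}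
    (hf : Function.Periodic f (N * Δ)) (k : ℤ) :
    f (((k : ZMod N).val : ℝ) * Δ) = f (k * Δ) := by
  have hk : (((k : ZMod N).val : ℤ) : ℝ) = k - (k / N : ℤ) * N := by
    rw [ZMod.val_intCast, Int.emod_def]
    push_cast
    ring
  rw [← Int.cast_natCast, hk, sub_mul, mul_assoc]
  exact (hf.int_mul (k / N)).sub_eq (k * Δ)

def curvatureSpeed (a w κ : ℝ) : ℝ := a * (w ^ 2 * κ + w ^ 3)

lemma curvatureSpeed_neg (a w κ : ℝ) : curvatureSpeed a (-w) (-κ) = -curvatureSpeed a w κ := by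
  simp only [curvatureSpeed]
  ring

lemma abs_mul_le_of_le {x y X Y : ℝ} (hx : |x| ≤ X) (hy : |y| ≤ Y) : |x * y| ≤ X * Y :=
  (abs_mul x y).trans_le (mul_le_mul hx hy (abs_nonneg _) ((abs_nonneg _).trans hx))

lemma curvatureSpeed_sub_curvatureSpeed_le {H M F δ η a d w κ ω q L : ℝ}
    (ha : |a| ≤ H) (hd : 0 ≤ d) (hdH : d ≤ H) (had : |a - d| ≤ η) (hw : |w| ≤ M) (hω : |ω| ≤ M)
    (he : |w - ω| ≤ F) (hκ : |κ - q| ≤ δ) (hq : |q| ≤ 2 * M) (hL : q ≤ L) :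
    curvatureSpeed a w κ - curvatureSpeed d ω L
      ≤ 7 * H * M ^ 2 * F + H * M ^ 2 * δ + 3 * M ^ 3 * η := by
  have hd' : |d| ≤ H := by rwa [abs_of_nonneg hd]
  have hw2 : |w ^ 2| ≤ M ^ 2 := by rw [abs_pow]; gcongr
  have hw3 : |w ^ 3| ≤ M ^ 3 := by rw [abs_pow]; gcongr
  have hsum : |w + ω| ≤ 2 * M := (abs_add_le w ω).trans (by linarith)
  have hsq : |w ^ 2 + w * ω + ω ^ 2| ≤ 3 * M ^ 2 := by
    have := abs_mul_le_of_le hw hω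
    have : |ω ^ 2| ≤ M ^ 2 := by rw [abs_pow]; gcongr
    calc |w ^ 2 + w * ω + ω ^ 2| ≤ |w ^ 2| + |w * ω| + |ω ^ 2| := abs_add_three _ _ _
      _ ≤ 3 * M ^ 2 := by linarith
  have h1 : |a * w ^ 2 * (κ - q)| ≤ H * M ^ 2 * δ := abs_mul_le_of_le (abs_mul_le_of_le ha hw2) hκ
  have h2 : |(a * w ^ 2 - d * ω ^ 2) * q| ≤ (η * M ^ 2 + H * (F * (2 * M))) * (2 * M) := by
    refine abs_mul_le_of_le ?_ hq
    rw [show a * w ^ 2 - d * ω ^ 2 = (a - d) * w ^ 2 + d * ((w - ω) * (w + ω)) by ring]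
    exact (abs_add_le _ _).trans (add_le_add (abs_mul_le_of_le had hw2)
      (abs_mul_le_of_le hd' (abs_mul_le_of_le he hsum)))
  have h3 : |(a - d) * w ^ 3| ≤ η * M ^ 3 := abs_mul_le_of_le had hw3
  have h4 : |d * ((w - ω) * (w ^ 2 + w * ω + ω ^ 2))| ≤ H * (F * (3 * M ^ 2)) :=
    abs_mul_le_of_le hd' (abs_mul_le_of_le he hsq)
  have h5 : 0 ≤ d * ω ^ 2 * (L - q) := by have := sub_nonneg.2 hL; positivity
  have hsplit : curvatureSpeed a w κ - curvatureSpeed d ω L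
      = a * w ^ 2 * (κ - q) + (a * w ^ 2 - d * ω ^ 2) * q + (a - d) * w ^ 3
        + d * ((w - ω) * (w ^ 2 + w * ω + ω ^ 2)) - d * ω ^ 2 * (L - q) := by
    simp only [curvatureSpeed]
    ring
  rw [hsplit]
  linarith [le_abs_self (a * w ^ 2 * (κ - q)), le_abs_self ((a * w ^ 2 - d * ω ^ 2) * q),
    le_abs_self ((a - d) * w ^ 3), le_abs_self (d * ((w - ω) * (w ^ 2 + w * ω + ω ^ 2)))]

lemma sign_mul_curvatureSpeed_sub_curvatureSpeed_le {H M F δ η a d w κ ω q L σ : ℝ}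
    (ha : |a| ≤ H) (hd : 0 ≤ d) (hdH : d ≤ H) (had : |a - d| ≤ η) (hw : |w| ≤ M) (hω : |ω| ≤ M)
    (he : |w - ω| ≤ F) (hκ : |κ - q| ≤ δ) (hq : |q| ≤ 2 * M) (hσ : σ = 1 ∨ σ = -1)
    (hL : σ * q ≤ σ * L) :
    σ * (curvatureSpeed a w κ - curvatureSpeed d ω L)
      ≤ 7 * H * M ^ 2 * F + H * M ^ 2 * δ + 3 * M ^ 3 * η := by
  rcases hσ with rfl | rfl
  · simp only [one_mul] at hL ⊢
    exact curvatureSpeed_sub_curvatureSpeed_le ha hd hdH had hw hω he hκ hq hL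
  · have := curvatureSpeed_sub_curvatureSpeed_le (M := M) (F := F) (δ := δ)
      (w := -w) (κ := -κ) (ω := -ω) (q := -q) (L := -L) ha hd hdH had
      (by rwa [abs_neg]) (by rwa [abs_neg]) (by rwa [← neg_add', abs_neg])
      (by rwa [← neg_add', abs_neg]) (by rwa [abs_neg]) (by linarith)
    rw [curvatureSpeed_neg, curvatureSpeed_neg] at this
    linarith

section maxAbs

variable {ι : Type*} [Fintype ι] [Nonempty ι]

noncomputable def maxAbs (u : ι → ℝ) : ℝ :=
  univ.sup' univ_nonempty fun i => |u i|

lemma abs_le_maxAbs (u : ι → ℝ) (i : ι) : |u i| ≤ maxAbs u :=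
  le_sup' (fun i => |u i|) (mem_univ i)

lemma sign_mul_le_maxAbs {σ : ℝ} (hσ : σ = 1 ∨ σ = -1) (u : ι → ℝ) (i : ι) :
    σ * u i ≤ maxAbs u := by
  rcases hσ with rfl | rfl
  · simpa using (le_abs_self _).trans (abs_le_maxAbs u i)
  · simpa using (neg_le_abs _).trans (abs_le_maxAbs u i)

lemma maxAbs_nonneg (u : ι → ℝ) : 0 ≤ maxAbs u :=
  (abs_nonneg _).trans (abs_le_maxAbs u (Classical.arbitrary ι))

lemma exists_abs_eq_maxAbs (u : ι → ℝ) : ∃ i, |u i| = maxAbs u := by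
  obtain ⟨i, -, hi⟩ := exists_mem_eq_sup' univ_nonempty fun i => |u i|
  exact ⟨i, hi.symm⟩

end maxAbs

noncomputable def crystallineLaplacian {N : ℕ} (Δθ : ℝ) (ω : ZMod N → ℝ) (i : ZMod N) : ℝ :=
  (ω (i + 1) - 2 * ω i + ω (i - 1)) / (2 * (1 - cos Δθ))

lemma sign_mul_curvatureSpeed_sub_le_of_eq_maxAbs {N : ℕ} [NeZero N] {M H η Δθ a d σ : ℝ}
    {V : ℝ → ℝ} {ω : ZMod N → ℝ} {i : ZMod N} (hΔ : 0 < Δθ) (hΔ2 : Δθ ≤ 2)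
    (hV : ContDiff ℝ 4 V) (hVper : Function.Periodic V (N * Δθ))
    (hVb : ∀ j ≤ 4, ∀ θ, |iteratedDeriv j V θ| ≤ M) (hω : |ω i| ≤ M)
    (ha : |a| ≤ H) (hd : 0 ≤ d) (hdH : d ≤ H) (had : |a - d| ≤ η) (hσ : σ = 1 ∨ σ = -1)
    (hi : σ * (V (i.val * Δθ) - ω i) = maxAbs fun j : ZMod N => V (j.val * Δθ) - ω j) :
    σ * (curvatureSpeed a (V (i.val * Δθ)) (iteratedDeriv 2 V (i.val * Δθ))
        - curvatureSpeed d (ω i) (crystallineLaplacian Δθ ω i))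
      ≤ 7 * H * M ^ 2 * (maxAbs fun j : ZMod N => V (j.val * Δθ) - ω j)
        + H * M ^ 2 * (M * Δθ ^ 2 / 4) + 3 * M ^ 3 * η := by
  set θ := (i.val : ℝ) * Δθ
  set e := fun j : ZMod N => V (j.val * Δθ) - ω j
  set c := 2 * (1 - cos Δθ)
  set q := (V (θ + Δθ) - 2 * V θ + V (θ - Δθ)) / c
  have hκ := abs_iteratedDeriv_two_sub_centralDiff_div_le hV (hVb 2 (by norm_num))
    (hVb 4 le_rfl) hΔ hΔ2 θ
  have hq : |q| ≤ 2 * M := by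
    have hM : 0 ≤ M := (abs_nonneg _).trans hω
    have hΔM : M * Δθ ^ 2 / 4 ≤ M := by
      nlinarith [mul_le_mul_of_nonneg_left (show Δθ ^ 2 ≤ 4 by nlinarith) hM]
    linarith [abs_sub_abs_le_abs_sub q (iteratedDeriv 2 V θ),
      abs_sub_comm q (iteratedDeriv 2 V θ), hVb 2 (by norm_num) θ]
  have hnext : V (θ + Δθ) = V ((i + 1).val * Δθ) := by
    have := hVper.map_intCast_val_mul ((i.val : ℤ) + 1)
    simp only [Int.cast_add, Int.cast_natCast, ZMod.natCast_zmod_val, Int.cast_one] at this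
    rw [this, add_mul, one_mul]
  have hprev : V (θ - Δθ) = V ((i - 1).val * Δθ) := by
    have := hVper.map_intCast_val_mul ((i.val : ℤ) - 1)
    simp only [Int.cast_sub, Int.cast_natCast, ZMod.natCast_zmod_val, Int.cast_one] at this
    rw [this, sub_mul, one_mul]
  have hL : σ * q ≤ σ * crystallineLaplacian Δθ ω i := by
    have hdiff : σ * crystallineLaplacian Δθ ω i - σ * q
        = (2 * maxAbs e - σ * e (i + 1) - σ * e (i - 1)) / c := by
      rw [← hi]
      simp only [crystallineLaplacian, q, e, hnext, hprev]
      ring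
    have hc : 0 ≤ c := by linarith [cos_le_one Δθ]
    have hnum : 0 ≤ 2 * maxAbs e - σ * e (i + 1) - σ * e (i - 1) := by
      linarith [sign_mul_le_maxAbs hσ e (i + 1), sign_mul_le_maxAbs hσ e (i - 1)]
    linarith [div_nonneg hnum hc]
  exact sign_mul_curvatureSpeed_sub_curvatureSpeed_le ha hd hdH had
    (by simpa using hVb 0 (by norm_num) θ) hω (abs_le_maxAbs e i) hκ hq hσ hL

lemma eventually_inv_sub_mul_sub_lt_of_hasDerivWithinAt {g : ℝ → ℝ} {g' c r x : ℝ}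
    (hg : HasDerivWithinAt g g' (Ioi x) x) (hc : g x ≤ c) (hr : 0 < r) (hmax : g x = c → g' < r) :
    ∀ᶠ z in 𝓝[>] x, (z - x)⁻¹ * (g z - c) < r := by
  rcases hc.lt_or_eq with hlt | rfl
  · filter_upwards [hg.continuousWithinAt.eventually_lt_const hlt, self_mem_nhdsWithin]
      with z hz hxz
    nlinarith [inv_pos.2 (sub_pos.2 (show x < z from hxz))]
  · have hslope := (hasDerivWithinAt_iff_tendsto_slope' (lt_irrefl x)).1 hg
    filter_upwards [hslope.eventually_lt_const (hmax rfl)] with z hz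
    simpa [slope_def_module] using hz

lemma maxAbs_le_gronwallBound {ι : Type*} [Fintype ι] [Nonempty ι] {f f' : ι → ℝ → ℝ}
    {a b K ε : ℝ} (hK : 0 ≤ K) (hε : 0 ≤ ε)
    (hf : ∀ i, ∀ x ∈ Icc a b, HasDerivWithinAt (f i) (f' i x) (Icc a b) x)
    (hmax : ∀ x ∈ Ico a b, ∀ i, ∀ σ : ℝ, (σ = 1 ∨ σ = -1) →
      σ * f i x = maxAbs (fun j => f j x) → σ * f' i x ≤ K * maxAbs (fun j => f j x) + ε) :
    ∀ x ∈ Icc a b, maxAbs (fun j => f j x) ≤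
      gronwallBound (maxAbs fun j => f j a) K ε (x - a) := by
  have hcont : ContinuousOn (fun x => maxAbs fun j => f j x) (Icc a b) :=
    ContinuousOn.finset_sup'_apply _ fun i _ x hx => (hf i x hx).continuousWithinAt.abs
  refine le_gronwallBound_of_liminf_deriv_right_le hcont (fun x hx r hr => ?_) le_rfl
    fun _ _ => le_rfl
  have hr0 : 0 < r := (add_nonneg (mul_nonneg hK (maxAbs_nonneg _)) hε).trans_lt hr
  have hIcc : Icc a b ∈ 𝓝[>] x :=
    mem_of_superset (Ioo_mem_nhdsGT hx.2) fun z hz => ⟨hx.1.trans hz.1.le, hz.2.le⟩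
  have hsign : ∀ i, ∀ σ : ℝ, (σ = 1 ∨ σ = -1) →
      ∀ᶠ z in 𝓝[>] x, (z - x)⁻¹ * (σ * f i z - maxAbs fun j => f j x) < r := by
    intro i σ hσ
    refine eventually_inv_sub_mul_sub_lt_of_hasDerivWithinAt
      (((hf i x (Ico_subset_Icc_self hx)).const_mul σ).mono_of_mem_nhdsWithin hIcc) ?_ hr0
      fun h => (hmax x hx i σ hσ h).trans_lt hr
    exact sign_mul_le_maxAbs hσ (fun j => f j x) i
  refine Eventually.frequently ?_
  filter_upwards [eventually_all.2 fun i => (hsign i 1 (.inl rfl)).and (hsign i (-1) (.inr rfl))]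
    with z hz
  obtain ⟨i, hi⟩ := exists_abs_eq_maxAbs fun j => f j z
  rw [← hi]
  rcases abs_cases (f i z) with ⟨h, -⟩ | ⟨h, -⟩
  · simpa [h] using (hz i).1
  · simpa [h] using (hz i).2

lemma gronwallBound_le_mul_exp_add {δ K ε x : ℝ} (hK : 0 ≤ K) (hε : 0 ≤ ε) :
    gronwallBound δ K ε x ≤ δ * exp (K * x) + ε * x * exp (K * x) := by
  rcases hK.eq_or_lt with rfl | hK
  · simp [gronwallBound_K0]
  rw [gronwallBound_of_K_ne_0 hK.ne']
  have hexp : exp (K * x) - 1 ≤ K * x * exp (K * x) := by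
    nlinarith [add_one_le_exp (-(K * x)), exp_neg (K * x), exp_pos (K * x),
      mul_inv_cancel₀ (exp_pos (K * x)).ne']
  calc δ * exp (K * x) + ε / K * (exp (K * x) - 1)
      ≤ δ * exp (K * x) + ε / K * (K * x * exp (K * x)) := by gcongr
    _ = δ * exp (K * x) + ε * x * exp (K * x) := by field_simp

/-- Second-order accuracy of the crystalline algorithm: if the smooth weighted
curvature `W` solves `W_t = h (W² W_θθ + W³)` with bounds `M`, `H`, and the
crystalline curvatures `ωᵢ` solve the discrete system with coefficients `hdᵢ`
approximating `h(iΔθ)` to order `(Δθ)²`, then there are constants `b, C ≥ 0`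
depending only on `M`, `H`, `C_h` such that
`maxᵢ |W(iΔθ, t) - ωᵢ(t)| ≤ (maxᵢ |W(iΔθ, 0) - ωᵢ(0)|) e^{bt} + C (Δθ)² t e^{bt}`. -/
theorem stmt15 (M H Ch : ℝ) (hM : 1 ≤ M) (hH : 0 < H) (hCh : 0 ≤ Ch) :
    ∃ b C : ℝ, 0 ≤ b ∧ 0 ≤ C ∧
      ∀ (N : ℕ) [NeZero N], 4 ≤ N →
      ∀ Δθ : ℝ, Δθ = 2 * π / N →
      ∀ T : ℝ, 0 < T →
      ∀ h : ℝ → ℝ, (∀ θ, 0 < h θ ∧ h θ ≤ H) →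
      ∀ W Wt : ℝ → ℝ → ℝ,
        (∀ θ t, W (θ + 2 * π) t = W θ t) →
        (∀ t ∈ Set.Icc (0:ℝ) T, ContDiff ℝ 4 (fun θ => W θ t)) →
        (∀ t ∈ Set.Icc (0:ℝ) T, ∀ j ≤ 4, ∀ θ : ℝ,
          |iteratedDeriv j (fun θ' => W θ' t) θ| ≤ M) →
        (∀ θ : ℝ, ∀ t ∈ Set.Icc (0:ℝ) T,
          HasDerivWithinAt (fun s => W θ s) (Wt θ t) (Set.Icc 0 T) t) →
        (∀ θ : ℝ, ∀ t ∈ Set.Icc (0:ℝ) T,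
          Wt θ t = h θ * ((W θ t) ^ 2 * iteratedDeriv 2 (fun θ' => W θ' t) θ
            + (W θ t) ^ 3)) →
      ∀ hd : ZMod N → ℝ,
        (∀ i : ZMod N, 0 < hd i ∧ hd i ≤ H ∧
          |hd i - h ((i.val : ℝ) * Δθ)| ≤ Ch * Δθ ^ 2) →
      ∀ ω : ℝ → ZMod N → ℝ,
        (∀ t ∈ Set.Icc (0:ℝ) T, ∀ i : ZMod N, |ω t i| ≤ M) →
        (∀ t ∈ Set.Icc (0:ℝ) T, ∀ i : ZMod N,
          HasDerivWithinAt (fun s => ω s i)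
            (hd i * ((ω t i) ^ 2 * (ω t (i + 1) - 2 * ω t i + ω t (i - 1))
                / (2 * (1 - Real.cos Δθ)) + (ω t i) ^ 3))
            (Set.Icc 0 T) t) →
      ∀ t ∈ Set.Icc (0:ℝ) T,
        Finset.univ.sup' Finset.univ_nonempty
            (fun i : ZMod N => |W ((i.val : ℝ) * Δθ) t - ω t i|) ≤
          Finset.univ.sup' Finset.univ_nonempty
              (fun i : ZMod N => |W ((i.val : ℝ) * Δθ) 0 - ω 0 i|)
            * Real.exp (b * t)
          + C * Δθ ^ 2 * t * Real.exp (b * t) := by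
  refine ⟨7 * H * M ^ 2, H * M ^ 3 / 4 + 3 * Ch * M ^ 3, by positivity, by positivity, ?_⟩
  intro N _ hN Δθ hΔθ T _ h hh W Wt hper hW hWb hWt hWeq hd hhd ω hωb hω t ht
  have hΔ : 0 < Δθ := hΔθ ▸ by positivity
  have hΔ2 : Δθ ≤ 2 := by
    have : (4 : ℝ) ≤ N := by exact_mod_cast hN
    rw [hΔθ, div_le_iff₀ (by positivity)]
    nlinarith [pi_le_four]
  have hWper : ∀ s, Function.Periodic (fun θ => W θ s) (N * Δθ) := fun s θ => by
    rw [hΔθ, mul_div_cancel₀ _ (by positivity)]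
    exact hper θ s
  have key := maxAbs_le_gronwallBound (a := 0) (b := T) (K := 7 * H * M ^ 2)
    (ε := (H * M ^ 3 / 4 + 3 * Ch * M ^ 3) * Δθ ^ 2)
    (f := fun i s => W (i.val * Δθ) s - ω s i)
    (f' := fun i s => Wt (i.val * Δθ) s
      - curvatureSpeed (hd i) (ω s i) (crystallineLaplacian Δθ (ω s) i))
    (by positivity) (by positivity)
    (fun i x hx => (hWt _ x hx).sub
      (by simpa only [curvatureSpeed, crystallineLaplacian, mul_div_assoc] using hω x hx i))
    (fun x hx i σ hσ hi => ?_) t ht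
  · exact key.trans ((gronwallBound_le_mul_exp_add (by positivity) (by positivity)).trans_eq
      (by simp only [maxAbs, sub_zero]))
  · have hx : x ∈ Icc 0 T := Ico_subset_Icc_self hx
    rw [hWeq _ x hx]
    exact (sign_mul_curvatureSpeed_sub_le_of_eq_maxAbs hΔ hΔ2 (hW x hx) (hWper x) (hWb x hx)
      (hωb x hx i) ((abs_of_pos (hh _).1).trans_le (hh _).2) (hhd i).1.le (hhd i).2.1
      (abs_sub_comm (hd i) _ ▸ (hhd i).2.2) hσ hi).trans_eq (by ring)
end

section
/- Let κ : ℝ → ℝ be twice continuously differentiable and positive, and let r : ℝ → ℝ² satisfy r'(θ) = (-sin θ, cos θ)/κ(θ) for all θ. Fix θ₀ ∈ ℝ. For small Δθ > 0 let p₊(Δθ) be the intersection of the tangent lines to r at θ₀ and at θ₀ + Δθ, and let p₋(Δθ) be the intersection of the tangent lines to r at θ₀ - Δθ and at θ₀ (where the tangent line at θ is the line through r(θ) with direction (-sin θ, cos θ)), and set L(Δθ) = ⟨p₊(Δθ) - p₋(Δθ), (-sin θ₀, cos θ₀)⟩. Then as Δθ → 0⁺, 2·tan(Δθ/2)/L(Δθ)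 = κ(θ₀) + O((Δθ)²). -/
/-!
Let `h(b) = ⟨r(b) - r(θ₀), (cos b, sin b)⟩` be the offset of the tangent line at normal angle `b`
from `r(θ₀)`. The two corners lie on the tangent line at `θ₀` at parameters `h(θ₀ + u) / sin u`
and `-h(θ₀ - u) / sin u`, so `L(u) = (h(θ₀ + u) + h(θ₀ - u)) / sin u`; since
`2 tan(u/2) sin u = 2 (1 - cos u)`, the crystalline curvature is
`2 (1 - cos u) / (h(θ₀ + u) + h(θ₀ - u))`. Integrating `r' = φ • (-sin, cos)` with `φ = 1/κ` gives
`h(θ₀ + u) + h(θ₀ - u) = ∫₀ᵘ sin (u - t) (φ(θ₀ + t) + φ(θ₀ - t)) dt = 2 φ(θ₀) (1 - cos u) + O(u⁴)`,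
because the symmetric second difference `φ(θ₀ + t) + φ(θ₀ - t) - 2 φ(θ₀)` is `O(t²)`: the
first-order terms cancel by symmetry, and this is what makes the error second order.
-/

open Real Asymptotics Set Filter Topology intervalIntegral

-- Signed distance from `P` to the line through `Q` with unit normal `(cos b, sin b)`.
noncomputable def lineOffset (P Q : ℝ × ℝ) (b : ℝ) : ℝ := (Q - P).1 * cos b + (Q - P).2 * sin b

noncomputable def tangentMeet (P Q : ℝ × ℝ) (a b : ℝ) : ℝ × ℝ :=
  P + (lineOffset P Q b / sin (b - a)) • (-sin a, cos a)

theorem exists_eq_add_smul_iff_lineOffset_eq_zero (P q : ℝ × ℝ) (b : ℝ) :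
    (∃ s : ℝ, q = P + s • (-sin b, cos b)) ↔ lineOffset P q b = 0 := by
  constructor
  · rintro ⟨s, rfl⟩
    simp only [lineOffset, add_sub_cancel_left, Prod.smul_fst, Prod.smul_snd, smul_eq_mul]
    ring
  · intro h
    refine ⟨-(q - P).1 * sin b + (q - P).2 * cos b, ?_⟩
    simp only [lineOffset, Prod.fst_sub, Prod.snd_sub] at h ⊢
    ext <;> simp only [Prod.fst_add, Prod.snd_add, Prod.smul_fst, Prod.smul_snd, smul_eq_mul]
    · linear_combination cos b * h - (q.1 - P.1) * sin_sq_add_cos_sq b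
    · linear_combination sin b * h - (q.2 - P.2) * sin_sq_add_cos_sq b

theorem tangentMeet_spec (P Q : ℝ × ℝ) {a b : ℝ} (h : sin (b - a) ≠ 0) :
    (∃ s : ℝ, tangentMeet P Q a b = P + s • (-sin a, cos a)) ∧
    (∃ s : ℝ, tangentMeet P Q a b = Q + s • (-sin b, cos b)) ∧
    ∀ q : ℝ × ℝ, ((∃ s : ℝ, q = P + s • (-sin a, cos a)) ∧
      (∃ s : ℝ, q = Q + s • (-sin b, cos b))) → q = tangentMeet P Q a b := by
  have offset_eq (s : ℝ) :
      lineOffset Q (P + s • (-sin a, cos a)) b = s * sin (b - a) - lineOffset P Q b := by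
    simp only [lineOffset, Prod.fst_sub, Prod.snd_sub, Prod.fst_add, Prod.snd_add,
      Prod.smul_fst, Prod.smul_snd, smul_eq_mul, sin_sub]
    ring
  refine ⟨⟨_, rfl⟩, ?_, ?_⟩
  · rw [exists_eq_add_smul_iff_lineOffset_eq_zero, tangentMeet, offset_eq, div_mul_cancel₀ _ h,
      sub_self]
  · rintro q ⟨⟨s, rfl⟩, hq⟩
    rw [exists_eq_add_smul_iff_lineOffset_eq_zero, offset_eq, sub_eq_zero] at hq
    rw [tangentMeet, ← hq, mul_div_cancel_right₀ _ h]

theorem tangentMeet_sub_tangentMeet_component (P Q Q' : ℝ × ℝ) (a b b' : ℝ) :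
    (tangentMeet P Q a b - tangentMeet P Q' a b').1 * (-sin a)
        + (tangentMeet P Q a b - tangentMeet P Q' a b').2 * cos a
      = lineOffset P Q b / sin (b - a) - lineOffset P Q' b' / sin (b' - a) := by
  simp only [tangentMeet, Prod.fst_sub, Prod.snd_sub, Prod.fst_add, Prod.snd_add,
    Prod.smul_fst, Prod.smul_snd, smul_eq_mul]
  linear_combination (lineOffset P Q b / sin (b - a) - lineOffset P Q' b' / sin (b' - a))
    * sin_sq_add_cos_sq a

section Curve

variable {κ : ℝ → ℝ} {r : ℝ → ℝ × ℝ}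

theorem hasDerivAt_lineOffset {θ : ℝ} (hr : HasDerivAt r (-sin θ / κ θ, cos θ / κ θ) θ)
    (P : ℝ × ℝ) (b : ℝ) :
    HasDerivAt (fun θ => lineOffset P (r θ) b) (sin (b - θ) / κ θ) θ := by
  have h1 : HasDerivAt (fun θ => (r θ).1) (-sin θ / κ θ) θ := hr.fst
  have h2 : HasDerivAt (fun θ => (r θ).2) (cos θ / κ θ) θ := hr.snd
  refine (((h1.sub_const P.1).mul_const (cos b)).add
    ((h2.sub_const P.2).mul_const (sin b))).congr_deriv ?_
  rw [sin_sub]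
  ring

theorem lineOffset_add_lineOffset_sub_eq_integral
    (hr : ∀ θ, HasDerivAt r (-sin θ / κ θ, cos θ / κ θ) θ) (hκ : Continuous κ)
    (hκ0 : ∀ θ, κ θ ≠ 0) (θ₀ u : ℝ) :
    lineOffset (r θ₀) (r (θ₀ + u)) (θ₀ + u) + lineOffset (r θ₀) (r (θ₀ - u)) (θ₀ - u)
        - 2 * (κ θ₀)⁻¹ * (1 - cos u)
      = ∫ t in (0 : ℝ)..u,
          sin (u - t) * ((κ (θ₀ + t))⁻¹ + (κ (θ₀ - t))⁻¹ - 2 * (κ θ₀)⁻¹) := by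
  have hg (t : ℝ) : HasDerivAt
      (fun t => lineOffset (r θ₀) (r (θ₀ + t)) (θ₀ + u)
        + lineOffset (r θ₀) (r (θ₀ - t)) (θ₀ - u) - 2 * (κ θ₀)⁻¹ * cos (u - t))
      (sin (u - t) * ((κ (θ₀ + t))⁻¹ + (κ (θ₀ - t))⁻¹ - 2 * (κ θ₀)⁻¹)) t := by
    have hplus := (hasDerivAt_lineOffset (hr _) (r θ₀) (θ₀ + u)).comp_const_add θ₀ t
    have hminus := (hasDerivAt_lineOffset (hr _) (r θ₀) (θ₀ - u)).comp_const_sub θ₀ t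
    have hcos := (hasDerivAt_cos (u - t)).comp_const_sub u t
    refine ((hplus.add hminus).sub (hcos.const_mul (2 * (κ θ₀)⁻¹))).congr_deriv ?_
    rw [show θ₀ + u - (θ₀ + t) = u - t by ring, show θ₀ - u - (θ₀ - t) = -(u - t) by ring,
      sin_neg]
    ring
  have hcont : Continuous fun t =>
      sin (u - t) * ((κ (θ₀ + t))⁻¹ + (κ (θ₀ - t))⁻¹ - 2 * (κ θ₀)⁻¹) := by
    fun_prop (disch := exact fun _ => hκ0 _)
  rw [integral_eq_sub_of_hasDerivAt (fun t _ => hg t) (hcont.intervalIntegrable _ _)]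
  simp only [lineOffset, add_zero, sub_zero, sub_self, Prod.fst_zero, Prod.snd_zero, zero_mul,
    cos_zero]
  ring

end Curve

theorem exists_abs_add_add_sub_two_mul_le {f : ℝ → ℝ} (hf : ContDiff ℝ 2 f) (x : ℝ) :
    ∃ M, 0 ≤ M ∧ ∀ t ∈ Icc (0 : ℝ) 1, |f (x + t) + f (x - t) - 2 * f x| ≤ M * t ^ 2 := by
  have hf' : Differentiable ℝ (deriv f) := hf.differentiable_deriv_two
  have hf'' : Continuous (deriv (deriv f)) := (hf.deriv' (n := 1)).continuous_deriv_one
  obtain ⟨K, hK⟩ := isCompact_Icc.exists_bound_of_continuousOn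
    (hf''.continuousOn (s := Icc (x - 1) (x + 1)))
  have hK0 : 0 ≤ K := (norm_nonneg _).trans (hK x ⟨by linarith, by linarith⟩)
  have hderiv_sub (s : ℝ) (hs : s ∈ Icc (0 : ℝ) 1) :
      |deriv f (x + s) - deriv f (x - s)| ≤ 2 * K * s := by
    have := (convex_Icc (x - 1) (x + 1)).norm_image_sub_le_of_norm_deriv_le (fun y _ => hf' y) hK
      (⟨by linarith [hs.1, hs.2], by linarith [hs.1, hs.2]⟩ : x - s ∈ Icc (x - 1) (x + 1))
      (⟨by linarith [hs.1, hs.2], by linarith [hs.1, hs.2]⟩ : x + s ∈ Icc (x - 1) (x + 1))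
    rwa [Real.norm_eq_abs, Real.norm_eq_abs, show x + s - (x - s) = 2 * s by ring,
      abs_of_nonneg (show 0 ≤ 2 * s by linarith [hs.1]), ← mul_assoc, mul_comm K] at this
  have hψ (s : ℝ) : HasDerivAt (fun s => f (x + s) + f (x - s) - 2 * f x)
      (deriv f (x + s) - deriv f (x - s)) s :=
    ((((hf.differentiable two_ne_zero _).hasDerivAt.comp_const_add x s).add
      ((hf.differentiable two_ne_zero _).hasDerivAt.comp_const_sub x s)).sub_const _)
  refine ⟨2 * K, by positivity, fun t ht => ?_⟩
  have := norm_image_sub_le_of_norm_deriv_le_segment' (C := 2 * K * t)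
    (fun s _ => (hψ s).hasDerivWithinAt)
    (fun s hs => (hderiv_sub s ⟨hs.1, hs.2.le.trans ht.2⟩).trans
      (by gcongr; exact hs.2.le)) t (right_mem_Icc.2 ht.1)
  simp only [add_zero, sub_zero, Real.norm_eq_abs, show f x + f x - 2 * f x = 0 by ring] at this
  exact this.trans_eq (by ring)

theorem abs_integral_sin_sub_mul_le {ψ : ℝ → ℝ} {M u : ℝ} (hM : 0 ≤ M) (hu : 0 ≤ u)
    (hψ : ∀ t ∈ Icc 0 u, |ψ t| ≤ M * t ^ 2) :
    |∫ t in (0 : ℝ)..u, sin (u - t) * ψ t| ≤ M * u ^ 4 := by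
  have hbound : ∀ t ∈ uIoc 0 u, ‖sin (u - t) * ψ t‖ ≤ u * (M * u ^ 2) := by
    intro t ht
    rw [uIoc_of_le hu] at ht
    rw [norm_mul, Real.norm_eq_abs, Real.norm_eq_abs]
    gcongr
    · exact abs_sin_le_abs.trans (by rw [abs_of_nonneg (by linarith [ht.2])]; linarith [ht.1])
    · exact (hψ t ⟨ht.1.le, ht.2⟩).trans (by gcongr <;> linarith [ht.1, ht.2])
  have := norm_integral_le_of_norm_le_const hbound
  rw [Real.norm_eq_abs, sub_zero, abs_of_nonneg hu] at this
  exact this.trans_eq (by ring)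

theorem isBigO_one_sub_cos_div_sub_inv {G : ℝ → ℝ} {a M : ℝ} (ha : 0 < a) (hM : 0 ≤ M)
    (hG : ∀ u ∈ Ioo (0 : ℝ) 1, |G u - 2 * a * (1 - cos u)| ≤ M * u ^ 4) :
    (fun u => 2 * (1 - cos u) / G u - a⁻¹) =O[𝓝[>] 0] fun u => u ^ 2 := by
  rw [isBigO_iff]
  refine ⟨π ^ 2 * M / (2 * a ^ 2), ?_⟩
  filter_upwards [Ioo_mem_nhdsGT (show (0 : ℝ) < min 1 (2 * a / (π ^ 2 * (M + 1))) by positivity)]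
    with u ⟨hu0, hu⟩
  have hu1 : u < 1 := hu.trans_le (min_le_left _ _)
  have huδ := (lt_div_iff₀ (by positivity)).1 (hu.trans_le (min_le_right _ _))
  have hMu : M * u ^ 2 ≤ 2 * a / π ^ 2 := by
    rw [le_div_iff₀ (by positivity)]
    nlinarith
  have hcos : 2 / π ^ 2 * u ^ 2 ≤ 1 - cos u := by
    have := cos_le_one_sub_mul_cos_sq (x := u)
      (by rw [abs_of_pos hu0]; linarith [pi_gt_three])
    linarith
  have hGu := abs_le.1 (hG u ⟨hu0, hu1⟩)
  have hGlow : 2 * a / π ^ 2 * u ^ 2 ≤ G u := by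
    have h1 : M * u ^ 4 ≤ 2 * a / π ^ 2 * u ^ 2 := by
      calc M * u ^ 4 = M * u ^ 2 * u ^ 2 := by ring
        _ ≤ 2 * a / π ^ 2 * u ^ 2 := by gcongr
    have h2 : 2 * a * (2 / π ^ 2 * u ^ 2) ≤ 2 * a * (1 - cos u) := by gcongr
    have h3 : 2 * a * (2 / π ^ 2 * u ^ 2) = 2 * (2 * a / π ^ 2 * u ^ 2) := by ring
    linarith
  have hGpos : 0 < G u := lt_of_lt_of_le (by positivity) hGlow
  rw [Real.norm_eq_abs, Real.norm_eq_abs, abs_of_nonneg (sq_nonneg u),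
    show 2 * (1 - cos u) / G u - a⁻¹ = -(G u - 2 * a * (1 - cos u)) / (a * G u) by
      field_simp; ring,
    abs_div, abs_neg, abs_of_pos (mul_pos ha hGpos), div_le_iff₀ (mul_pos ha hGpos)]
  calc |G u - 2 * a * (1 - cos u)| ≤ M * u ^ 4 := hG u ⟨hu0, hu1⟩
    _ = π ^ 2 * M / (2 * a ^ 2) * u ^ 2 * (a * (2 * a / π ^ 2 * u ^ 2)) := by
      field_simp
    _ ≤ π ^ 2 * M / (2 * a ^ 2) * u ^ 2 * (a * G u) := by gcongr

theorem tan_half_mul_sin {x : ℝ} (hx : cos (x / 2) ≠ 0) : tan (x / 2) * sin x = 1 - cos x := by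
  have hsin : sin x = 2 * sin (x / 2) * cos (x / 2) := by
    rw [← sin_two_mul]; ring_nf
  have hcos : cos x = 2 * cos (x / 2) ^ 2 - 1 := by
    rw [cos_sq, show 2 * (x / 2) = x by ring]; ring
  rw [tan_eq_sin_div_cos, hsin, hcos]
  field_simp
  linear_combination 2 * sin_sq_add_cos_sq (x / 2)

/-- The crystalline curvature of a side of the circumscribed polygon approximates
the curvature of the curve to second order: with `p₊(Δθ)` (resp. `p₋(Δθ)`) the
intersection of the tangent lines to `r` at `θ₀` and `θ₀ + Δθ` (resp. at
`θ₀ - Δθ` and `θ₀`), and `L(Δθ) = ⟨p₊(Δθ) - p₋(Δθ), (-sin θ₀, cos θ₀)⟩`, one has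
`2 tan(Δθ/2)/L(Δθ) = κ(θ₀) + O((Δθ)²)` as `Δθ → 0⁺`. -/
theorem stmt19 (κ : ℝ → ℝ) (hκ : ContDiff ℝ 2 κ) (hκpos : ∀ θ, 0 < κ θ)
    (r : ℝ → ℝ × ℝ)
    (hr : ∀ θ : ℝ, HasDerivAt r (-Real.sin θ / κ θ, Real.cos θ / κ θ) θ)
    (θ₀ : ℝ) :
    ∃ ε > (0:ℝ), ∃ pPlus pMinus : ℝ → ℝ × ℝ,
      (∀ Δθ ∈ Set.Ioo (0:ℝ) ε,
        ((∃ s : ℝ, pPlus Δθ = r θ₀ + s • (-Real.sin θ₀, Real.cos θ₀)) ∧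
         (∃ s : ℝ, pPlus Δθ = r (θ₀ + Δθ)
            + s • (-Real.sin (θ₀ + Δθ), Real.cos (θ₀ + Δθ))) ∧
         (∀ q : ℝ × ℝ,
            ((∃ s : ℝ, q = r θ₀ + s • (-Real.sin θ₀, Real.cos θ₀)) ∧
             (∃ s : ℝ, q = r (θ₀ + Δθ)
                + s • (-Real.sin (θ₀ + Δθ), Real.cos (θ₀ + Δθ)))) → q = pPlus Δθ)) ∧
        ((∃ s : ℝ, pMinus Δθ = r (θ₀ - Δθ)
            + s • (-Real.sin (θ₀ - Δθ), Real.cos (θ₀ - Δθ))) ∧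
         (∃ s : ℝ, pMinus Δθ = r θ₀ + s • (-Real.sin θ₀, Real.cos θ₀)) ∧
         (∀ q : ℝ × ℝ,
            ((∃ s : ℝ, q = r (θ₀ - Δθ)
                + s • (-Real.sin (θ₀ - Δθ), Real.cos (θ₀ - Δθ))) ∧
             (∃ s : ℝ, q = r θ₀ + s • (-Real.sin θ₀, Real.cos θ₀))) → q = pMinus Δθ))) ∧
      ((fun Δθ => 2 * Real.tan (Δθ / 2)
          / ((pPlus Δθ - pMinus Δθ).1 * (-Real.sin θ₀)
              + (pPlus Δθ - pMinus Δθ).2 * Real.cos θ₀)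
          - κ θ₀)
        =O[nhdsWithin (0:ℝ) (Set.Ioi 0)] fun Δθ => Δθ ^ 2) := by
  have hκ0 : ∀ θ, κ θ ≠ 0 := fun θ => (hκpos θ).ne'
  obtain ⟨M, hM0, hM⟩ := exists_abs_add_add_sub_two_mul_le (hκ.inv hκ0) θ₀
  have hremainder : ∀ u ∈ Ioo (0 : ℝ) 1,
      |lineOffset (r θ₀) (r (θ₀ + u)) (θ₀ + u) + lineOffset (r θ₀) (r (θ₀ - u)) (θ₀ - u)
        - 2 * (κ θ₀)⁻¹ * (1 - cos u)| ≤ M * u ^ 4 := fun u hu => by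
    rw [lineOffset_add_lineOffset_sub_eq_integral hr hκ.continuous hκ0]
    exact abs_integral_sin_sub_mul_le hM0 hu.1.le fun t ht => hM t ⟨ht.1, ht.2.trans hu.2.le⟩
  refine ⟨π, pi_pos, fun u => tangentMeet (r θ₀) (r (θ₀ + u)) θ₀ (θ₀ + u),
    fun u => tangentMeet (r θ₀) (r (θ₀ - u)) θ₀ (θ₀ - u), fun u hu => ?_, ?_⟩
  · have hsin : sin u ≠ 0 := (sin_pos_of_pos_of_lt_pi hu.1 hu.2).ne'
    obtain ⟨hplus₁, hplus₂, hplus_unique⟩ :=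
      tangentMeet_spec (r θ₀) (r (θ₀ + u)) (a := θ₀) (b := θ₀ + u) (by simpa using hsin)
    obtain ⟨hminus₁, hminus₂, hminus_unique⟩ :=
      tangentMeet_spec (r θ₀) (r (θ₀ - u)) (a := θ₀) (b := θ₀ - u) (by simpa using hsin)
    exact ⟨⟨hplus₁, hplus₂, hplus_unique⟩, hminus₂, hminus₁, fun q hq => hminus_unique q hq.symm⟩
  · have key := isBigO_one_sub_cos_div_sub_inv (inv_pos.2 (hκpos θ₀)) hM0 hremainder
    rw [inv_inv] at key
    refine key.congr' ?_ EventuallyEq.rfl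
    filter_upwards [Ioo_mem_nhdsGT pi_pos] with u hu
    have hcos : cos (u / 2) ≠ 0 :=
      (cos_pos_of_mem_Ioo ⟨by linarith [hu.1, pi_pos], by linarith [hu.2]⟩).ne'
    rw [tangentMeet_sub_tangentMeet_component, add_sub_cancel_left,
      show θ₀ - u - θ₀ = -u by ring, sin_neg, div_neg, sub_neg_eq_add, ← add_div,
      div_div_eq_mul_div, mul_assoc, tan_half_mul_sin hcos]
end
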